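/- arXiv:1310.2872 — 2 statements merged into one kernel-verified Lean document; each statement's English description precedes it below -/
import Mathlib

section
/- Let G be a finite simple graph on vertex set {x_{11}, …, x_{n1}} and for each i = 1, …, n let G_i be a connected chordal graph with at least two vertices such that x_{i1} ∈ V(G_i) is a neighbor of a simplicial vertex of G_i. Then the attachment graph G(G_1, …, G_n) is vertex decomposable. -/
variable {V : Type*} [DecidableEq V]

/-- `S` is an independent set of the induced subgraph of `G` on the vertex set `A`. -/
def IsIndepIn (G : SimpleGraph V) (A S : Finset V) : Prop :=
  S ⊆ A ∧ ∀ u ∈ S, ∀ v ∈ S, ¬G.Adj u v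

/-- `S` is a maximal independent set of the induced subgraph of `G` on the vertex set `A`. -/
def IsMaxIndepIn (G : SimpleGraph V) (A S : Finset V) : Prop :=
  IsIndepIn G A S ∧ ∀ T, IsIndepIn G A T → S ⊆ T → S = T

/-- The induced subgraph of `G` on `A` is unmixed: all maximal independent sets
have the same cardinality. -/
def UnmixedOn (G : SimpleGraph V) (A : Finset V) : Prop :=
  ∀ S T, IsMaxIndepIn G A S → IsMaxIndepIn G A T → S.card = T.card

open scoped Classical in
/-- The vertex set `A \ N_G[x]`. -/
noncomputable def delClosedNbhd (G : SimpleGraph V) (A : Finset V) (x : V) : Finset V :=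
  A.filter fun y => y ≠ x ∧ ¬G.Adj x y

/-- The induced subgraph of `G` on `A` is vertex decomposable. -/
inductive VertexDecomposableOn (G : SimpleGraph V) : Finset V → Prop
  | edgeless (A : Finset V) (h : ∀ u ∈ A, ∀ v ∈ A, ¬G.Adj u v) : VertexDecomposableOn G A
  | shed (A : Finset V) (x : V) (hx : x ∈ A)
      (hlink : VertexDecomposableOn G (delClosedNbhd G A x))
      (hdel : VertexDecomposableOn G (A.erase x))
      (hexch : ∀ S, IsIndepIn G (delClosedNbhd G A x) S →
        ∃ y ∈ A, G.Adj x y ∧ IsIndepIn G (A.erase x) (insert y S)) :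
      VertexDecomposableOn G A

/-- `x` is a shedding vertex of the induced subgraph of `G` on `A`. -/
def IsSheddingVertexOn (G : SimpleGraph V) (A : Finset V) (x : V) : Prop :=
  x ∈ A ∧
  VertexDecomposableOn G (delClosedNbhd G A x) ∧
  VertexDecomposableOn G (A.erase x) ∧
  ∀ S, IsIndepIn G (delClosedNbhd G A x) S →
    ∃ y ∈ A, G.Adj x y ∧ IsIndepIn G (A.erase x) (insert y S)

/-- The independence complex of the induced subgraph of `G` on `A` is shellable:
there is an ordering `F 0, F 1, …` of its facets (the maximal independent sets) such
that for every `i`, every face of the subcomplex `(⋃ j < i, ⟨F j⟩) ∩ ⟨F i⟩` is contained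
in a face of that subcomplex of cardinality `(F i).card - 1` (i.e. the subcomplex is
pure of dimension `dim (F i) - 1`). -/
def ShellableOn (G : SimpleGraph V) (A : Finset V) : Prop :=
  ∃ (t : ℕ) (F : Fin t → Finset V),
    Function.Injective F ∧
    (∀ S, IsMaxIndepIn G A S ↔ ∃ i, F i = S) ∧
    ∀ i : Fin t, ∀ S : Finset V, S ⊆ F i → (∃ j, j < i ∧ S ⊆ F j) →
      ∃ S' : Finset V, S ⊆ S' ∧ S' ⊆ F i ∧ (∃ j, j < i ∧ S' ⊆ F j) ∧
        S'.card = (F i).card - 1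

/-- A graph is chordal if every cycle of length at least four has a chord, i.e. an
edge of the graph joining two vertices of the cycle that is not an edge of the cycle. -/
def IsChordal (G : SimpleGraph V) : Prop :=
  ∀ (x : V) (w : G.Walk x x), w.IsCycle → 4 ≤ w.length →
    ∃ u v, u ∈ w.support ∧ v ∈ w.support ∧ G.Adj u v ∧ s(u, v) ∉ w.edges

/-- The induced subgraph of `G` on `A` is a cycle graph on `m` vertices. -/
def IsCycleGraphOn (G : SimpleGraph V) (A : Finset V) (m : ℕ) : Prop :=
  (∀ u v, G.Adj u v → u ∈ A ∧ v ∈ A) ∧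
  Nonempty (G.induce (A : Set V) ≃g SimpleGraph.cycleGraph m)

/-- The independence number of the induced subgraph of `G` on `A`. -/
noncomputable def indepNumOn (G : SimpleGraph V) (A : Finset V) : ℕ :=
  sSup {k | ∃ S, IsIndepIn G A S ∧ S.card = k}

/-!
Each root `x i` is adjacent to a vertex `z i` that is simplicial in the whole attachment graph,
and a neighbour `x` of a simplicial vertex `z` is a shedding vertex: an independent set avoiding
`N[x]` stays independent after adding `z`. Shedding the roots one by one never deletes the
simplicial partner of a remaining root, so the problem reduces to vertex sets without roots. On
those the attachment graph is a vertex-disjoint union of induced subgraphs of the chordal `G i`,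
and chordal graphs are vertex decomposable by the same shedding argument, because every chordal
graph has a simplicial vertex (Dirac). For Dirac's theorem, a minimum separator of two
non-adjacent vertices is a clique: two non-adjacent vertices of it, joined by shortest paths
through both sides, would span a chordless cycle of length at least four.
-/

open SimpleGraph

namespace SimpleGraph.Walk

variable {G : SimpleGraph V}

theorem exists_support_subset_length_lt_of_isChord {u v p q : V} (w : G.Walk u v)
    (h : w.IsChord s(p, q)) :
    ∃ w' : G.Walk u v, w'.support ⊆ w.support ∧ w'.length < w.length := by
  induction w with
  | nil =>
    obtain ⟨hpq, -, hp, hq⟩ := isChord_sym2Mk.1 h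
    simp only [support_nil, List.mem_singleton] at hp hq
    exact absurd (hp ▸ hq ▸ hpq) (G.irrefl)
  | @cons u u' v hadj w ih =>
    obtain ⟨hpq, he, hp, hq⟩ := isChord_sym2Mk.1 h
    have chord_at_start : ∀ r, G.Adj u r → r ∈ w.support → s(u, r) ≠ s(u, u') →
        ∃ w' : G.Walk u v,
          w'.support ⊆ (cons hadj w).support ∧ w'.length < (cons hadj w).length := by
      intro r hur hr hne
      have hru' : r ≠ u' := by rintro rfl; exact hne rfl
      refine ⟨cons hur (w.dropUntil r hr), ?_, ?_⟩
      · simpa [support_cons] using List.cons_subset_cons _ (w.support_dropUntil_subset_support hr)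
      · simpa using length_dropUntil_lt_length hr hru'
    simp only [edges_cons, List.mem_cons, not_or] at he
    simp only [support_cons, List.mem_cons] at hp hq
    rcases hp with rfl | hp
    · exact chord_at_start q hpq (hq.resolve_left (G.ne_of_adj hpq).symm) he.1
    rcases hq with rfl | hq
    · exact chord_at_start p hpq.symm hp (by rw [Sym2.eq_swap]; exact he.1)
    obtain ⟨w', hsub, hlt⟩ := ih (isChord_sym2Mk.2 ⟨hpq, he.2, hp, hq⟩)
    exact ⟨cons hadj w', by simpa using List.cons_subset_cons _ hsub, by simpa using hlt⟩

theorem exists_isPath_isChordless_support_subset {u v : V} (w : G.Walk u v) :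
    ∃ w' : G.Walk u v, w'.IsPath ∧ w'.IsChordless ∧ w'.support ⊆ w.support := by
  by_cases hpath : w.IsPath
  · by_cases hc : w.IsChordless
    · exact ⟨w, hpath, hc, List.Subset.refl _⟩
    · obtain ⟨e, he⟩ : ∃ e, w.IsChord e := by simpa [IsChordless] using hc
      induction e using Sym2.ind
      obtain ⟨w', hsub, hlt⟩ := w.exists_support_subset_length_lt_of_isChord he
      obtain ⟨w'', hpath', hc', hsub'⟩ := exists_isPath_isChordless_support_subset w'
      exact ⟨w'', hpath', hc', List.Subset.trans hsub' hsub⟩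
  · have hlt : w.bypass.length < w.length := by
      refine lt_of_le_of_ne w.length_bypass_le_length fun h => hpath ?_
      rw [← bypass_eq_self_of_length_le_length_bypass w h.ge]
      exact w.bypass_isPath
    obtain ⟨w'', hpath', hc', hsub'⟩ := exists_isPath_isChordless_support_subset w.bypass
    exact ⟨w'', hpath', hc', List.Subset.trans hsub' w.support_bypass_subset_support⟩
termination_by w.length

end SimpleGraph.Walk

section

variable {G : SimpleGraph V}

theorem IsChordal.adj_of_walks_through_separated (hG : IsChordal G) {u v : V} (huv : u ≠ v)
    {D E : Set V} (hDE : Disjoint D E) (hDEadj : ∀ p ∈ D, ∀ q ∈ E, ¬G.Adj p q)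
    (p : G.Walk u v) (hp : ∀ y ∈ p.support, y = u ∨ y = v ∨ y ∈ D)
    (q : G.Walk v u) (hq : ∀ y ∈ q.support, y = v ∨ y = u ∨ y ∈ E) : G.Adj u v := by
  by_contra hnadj
  obtain ⟨P, hP, hPc, hPp⟩ := p.exists_isPath_isChordless_support_subset
  obtain ⟨Q, hQ, hQc, hQq⟩ := q.exists_isPath_isChordless_support_subset
  have two_le_length :
      ∀ {a b : V} (r : G.Walk a b), a ≠ b → ¬G.Adj a b → 2 ≤ r.length := by
    intro a b r hab hnab
    by_contra! hr
    interval_cases h : r.length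
    · exact hab (Walk.eq_of_length_eq_zero h)
    · exact hnab (Walk.adj_of_length_eq_one h)
  have hPu : u ∉ P.support.tail := by
    have := hP.support_nodup; rw [← P.cons_tail_support] at this; exact (List.nodup_cons.1 this).1
  have hQv : v ∉ Q.support.tail := by
    have := hQ.support_nodup; rw [← Q.cons_tail_support] at this; exact (List.nodup_cons.1 this).1
  have hPD : ∀ y ∈ P.support, y ∉ Q.support → y ∈ D := fun y hy hyQ =>
    ((hp y (hPp hy)).resolve_left (by rintro rfl; exact hyQ Q.end_mem_support)).resolve_left
      (by rintro rfl; exact hyQ Q.start_mem_support)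
  have hQE : ∀ y ∈ Q.support, y ∉ P.support → y ∈ E := fun y hy hyP =>
    ((hq y (hQq hy)).resolve_left (by rintro rfl; exact hyP P.end_mem_support)).resolve_left
      (by rintro rfl; exact hyP P.start_mem_support)
  have hcycle : (P.append Q).IsCycle := by
    refine hP.isCycle_append hQ (fun y hyP hyQ => ?_)
      (Or.inl (two_le_length P huv hnadj))
    have hyu : y ≠ u := by rintro rfl; exact hPu hyP
    have hyv : y ≠ v := by rintro rfl; exact hQv hyQ
    have hyD := ((hp y (hPp (List.mem_of_mem_tail hyP))).resolve_left hyu).resolve_left hyv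
    have hyE := ((hq y (hQq (List.mem_of_mem_tail hyQ))).resolve_left hyv).resolve_left hyu
    exact Set.disjoint_left.1 hDE hyD hyE
  have hlength : 4 ≤ (P.append Q).length := by
    have := two_le_length P huv hnadj
    have := two_le_length Q huv.symm (fun h => hnadj h.symm)
    rw [Walk.length_append]; omega
  obtain ⟨a, b, ha, hb, hab, he⟩ := hG u _ hcycle hlength
  rw [Walk.mem_support_append_iff] at ha hb
  rw [Walk.edges_append, List.mem_append, not_or] at he
  have hnotP : ¬(a ∈ P.support ∧ b ∈ P.support) := fun h => he.1 (hPc.mem_edges h.1 h.2 hab)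
  have hnotQ : ¬(a ∈ Q.support ∧ b ∈ Q.support) := fun h => he.2 (hQc.mem_edges h.1 h.2 hab)
  rcases ha with ha | ha <;> rcases hb with hb | hb
  · exact hnotP ⟨ha, hb⟩
  · exact hDEadj a (hPD a ha fun h => hnotQ ⟨h, hb⟩) b (hQE b hb fun h => hnotP ⟨ha, h⟩)
      hab
  · exact hDEadj b (hPD b hb fun h => hnotQ ⟨ha, h⟩) a (hQE a ha fun h => hnotP ⟨h, hb⟩)
      hab.symm
  · exact hnotQ ⟨ha, hb⟩

/-- `D` is a union of connected components of the subgraph of `G` induced on `W`. -/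
def IsClosedIn (G : SimpleGraph V) (W D : Finset V) : Prop :=
  D ⊆ W ∧ ∀ d ∈ D, ∀ y ∈ W, G.Adj d y → y ∈ D

def SeparatedIn (G : SimpleGraph V) (W : Finset V) (a b : V) : Prop :=
  ∃ D, IsClosedIn G W D ∧ a ∈ D ∧ b ∉ D

open scoped Classical in
noncomputable def componentIn (G : SimpleGraph V) (W : Finset V) (a : V) : Finset V :=
  W.filter fun y => ∃ w : G.Walk a y, ∀ z ∈ w.support, z ∈ W

namespace IsClosedIn

variable {W D : Finset V}

theorem sdiff (hD : IsClosedIn G W D) : IsClosedIn G W (W \ D) :=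
  ⟨Finset.sdiff_subset, fun d hd y hy hdy => Finset.mem_sdiff.2 ⟨hy, fun hyD =>
    (Finset.mem_sdiff.1 hd).2 (hD.2 y hyD d (Finset.mem_sdiff.1 hd).1 hdy.symm)⟩⟩

theorem insert_of_forall_not_adj (hD : IsClosedIn G W D) {s : V} (hs : ∀ d ∈ D, ¬G.Adj d s) :
    IsClosedIn G (insert s W) D := by
  refine ⟨hD.1.trans (Finset.subset_insert _ _), fun d hd y hy hdy => ?_⟩
  rcases Finset.mem_insert.1 hy with rfl | hy
  · exact absurd hdy (hs d hd)
  · exact hD.2 d hd y hy hdy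

omit [DecidableEq V] in
theorem support_subset {a b : V} (hD : IsClosedIn G W D) (ha : a ∈ D) (w : G.Walk a b)
    (hw : ∀ z ∈ w.support, z ∈ W) : ∀ z ∈ w.support, z ∈ D := by
  induction w with
  | nil => simpa using ha
  | cons h w ih =>
    have hw' : ∀ z ∈ w.support, z ∈ W := fun z hz => hw z (by simp [hz])
    have := ih (hD.2 _ ha _ (hw' _ w.start_mem_support) h) hw'
    simpa [ha] using this

end IsClosedIn

omit [DecidableEq V] in
theorem mem_componentIn {W : Finset V} {a y : V} :
    y ∈ componentIn G W a ↔ ∃ w : G.Walk a y, ∀ z ∈ w.support, z ∈ W := by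
  classical
  simp only [componentIn, Finset.mem_filter, and_iff_right_iff_imp]
  exact fun ⟨w, hw⟩ => hw y w.end_mem_support

omit [DecidableEq V] in
theorem self_mem_componentIn {W : Finset V} {a : V} (ha : a ∈ W) : a ∈ componentIn G W a :=
  mem_componentIn.2 ⟨.nil, by simpa using ha⟩

omit [DecidableEq V] in
theorem isClosedIn_componentIn (W : Finset V) (a : V) : IsClosedIn G W (componentIn G W a) := by
  refine ⟨fun y hy => ?_, fun d hd y hy hdy => mem_componentIn.2 ?_⟩
  · obtain ⟨w, hw⟩ := mem_componentIn.1 hy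
    exact hw y w.end_mem_support
  obtain ⟨w, hw⟩ := mem_componentIn.1 hd
  refine ⟨w.concat hdy, fun z hz => ?_⟩
  rw [Walk.support_concat, List.mem_append, List.mem_singleton] at hz
  rcases hz with hz | rfl
  exacts [hw z hz, hy]

omit [DecidableEq V] in
theorem componentIn_subset {W D : Finset V} {a : V} (hD : IsClosedIn G W D) (ha : a ∈ D) :
    componentIn G W a ⊆ D := fun y hy =>
  let ⟨w, hw⟩ := mem_componentIn.1 hy
  hD.support_subset ha w hw y w.end_mem_support

omit [DecidableEq V] in
theorem exists_walk_through_componentIn {W : Finset V} {a u v p q : V}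
    (hp : p ∈ componentIn G W a) (hq : q ∈ componentIn G W a) (hup : G.Adj u p)
    (hqv : G.Adj q v) :
    ∃ w : G.Walk u v, ∀ y ∈ w.support, y = u ∨ y = v ∨ y ∈ componentIn G W a := by
  obtain ⟨wp, hwp⟩ := mem_componentIn.1 hp
  obtain ⟨wq, hwq⟩ := mem_componentIn.1 hq
  have hW : ∀ z ∈ (wp.reverse.append wq).support, z ∈ W := by
    intro z hz
    rcases Walk.mem_support_append_iff _ _ |>.1 hz with hz | hz
    · exact hwp z (by simpa using hz)
    · exact hwq z hz
  have hsub := (isClosedIn_componentIn W a).support_subset hp _ hW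
  refine ⟨.cons hup ((wp.reverse.append wq).concat hqv), fun y hy => ?_⟩
  rw [Walk.support_cons, Walk.support_concat, List.mem_cons, List.mem_append,
    List.mem_singleton] at hy
  rcases hy with rfl | hy | rfl
  · exact Or.inl rfl
  · exact Or.inr (Or.inr (hsub y hy))
  · exact Or.inr (Or.inl rfl)

theorem SeparatedIn.symm {W : Finset V} {a b : V} (h : SeparatedIn G W a b) (hb : b ∈ W) :
    SeparatedIn G W b a :=
  let ⟨D, hD, haD, hbD⟩ := h
  ⟨W \ D, hD.sdiff, Finset.mem_sdiff.2 ⟨hb, hbD⟩, fun h => (Finset.mem_sdiff.1 h).2 haD⟩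

theorem IsClosedIn.exists_adj_of_not_separatedIn {W D : Finset V} {a b s : V}
    (hD : IsClosedIn G W D) (haD : a ∈ D) (hbD : b ∉ D)
    (hsep : ¬SeparatedIn G (insert s W) a b) : ∃ p ∈ D, G.Adj s p := by
  by_contra! h
  exact hsep ⟨D, hD.insert_of_forall_not_adj fun d hd hds => h d hd hds.symm, haD, hbD⟩

theorem exists_minimal_separator {A : Finset V} {a b : V} (ha : a ∈ A) (hab : a ≠ b)
    (hnadj : ¬G.Adj a b) :
    ∃ S ⊆ A \ {a, b}, SeparatedIn G (A \ S) a b ∧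
      ∀ s ∈ S, ¬SeparatedIn G (A \ S.erase s) a b := by
  classical
  set separators := (A \ {a, b}).powerset.filter fun S => SeparatedIn G (A \ S) a b
  have htrivial_sep : A \ {a, b} ∈ separators := by
    refine Finset.mem_filter.2
      ⟨Finset.mem_powerset_self _, {a}, ⟨?_, ?_⟩, Finset.mem_singleton_self a, ?_⟩
    · simpa using ha
    · intro d hd y hy hdy
      rw [Finset.mem_singleton] at hd
      subst hd
      obtain ⟨-, rfl | rfl⟩ : y ∈ A ∧ (y = d ∨ y = b) := by simpa using hy
      · exact absurd hdy (G.irrefl)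
      · exact absurd hdy hnadj
    · simpa using hab.symm
  obtain ⟨S, hS, hmin⟩ := Finset.exists_min_image separators Finset.card ⟨_, htrivial_sep⟩
  obtain ⟨hSab, hsep⟩ : S ⊆ A \ {a, b} ∧ SeparatedIn G (A \ S) a b := by
    simpa [separators] using hS
  refine ⟨S, hSab, hsep, fun s hs hsep' => ?_⟩
  have := hmin (S.erase s) (Finset.mem_filter.2
    ⟨Finset.mem_powerset.2 ((Finset.erase_subset _ _).trans hSab), hsep'⟩)
  have := Finset.card_erase_lt_of_mem hs
  omega

theorem IsChordal.exists_isClique_separator (hG : IsChordal G) {A : Finset V} {a b : V}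
    (ha : a ∈ A) (hb : b ∈ A) (hab : a ≠ b) (hnadj : ¬G.Adj a b) :
    ∃ S ⊆ A, G.IsClique (S : Set V) ∧ ∃ Da Db, IsClosedIn G (A \ S) Da ∧
      IsClosedIn G (A \ S) Db ∧ a ∈ Da ∧ b ∈ Db ∧ Disjoint Da Db := by
  obtain ⟨S, hSab, ⟨D, hD, haD, hbD⟩, hmin⟩ :=
    exists_minimal_separator (G := G) ha hab hnadj
  have hSA : S ⊆ A := hSab.trans Finset.sdiff_subset
  have haW : a ∈ A \ S := Finset.mem_sdiff.2 ⟨ha, fun h => by simpa using hSab h⟩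
  have hbW : b ∈ A \ S := Finset.mem_sdiff.2 ⟨hb, fun h => by simpa using hSab h⟩
  set Da := componentIn G (A \ S) a
  set Db := componentIn G (A \ S) b
  have hDaD : Da ⊆ D := componentIn_subset hD haD
  have hDbD : Db ⊆ (A \ S) \ D := componentIn_subset hD.sdiff (Finset.mem_sdiff.2 ⟨hbW, hbD⟩)
  have hdisj : Disjoint Da Db :=
    Finset.disjoint_of_subset_left hDaD (Finset.disjoint_of_subset_right hDbD Finset.disjoint_sdiff)
  have exists_adj : ∀ s ∈ S, (∃ p ∈ Da, G.Adj s p) ∧ ∃ q ∈ Db, G.Adj s q := by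
    intro s hs
    have hsep := hmin s hs
    rw [Finset.sdiff_erase (hSA hs)] at hsep
    exact ⟨(isClosedIn_componentIn _ _).exists_adj_of_not_separatedIn
        (self_mem_componentIn haW) (fun h => hbD (hDaD h)) hsep,
      (isClosedIn_componentIn _ _).exists_adj_of_not_separatedIn
        (self_mem_componentIn hbW) (fun h => (Finset.mem_sdiff.1 (hDbD h)).2 haD)
        fun h => hsep (h.symm (Finset.mem_insert_of_mem haW))⟩
  refine ⟨S, hSA, ?_, Da, Db, isClosedIn_componentIn _ _, isClosedIn_componentIn _ _,
    self_mem_componentIn haW, self_mem_componentIn hbW, hdisj⟩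
  intro u hu v hv huv
  obtain ⟨⟨pu, hpu, hupu⟩, qu, hqu, huqu⟩ := exists_adj u hu
  obtain ⟨⟨pv, hpv, hvpv⟩, qv, hqv, hvqv⟩ := exists_adj v hv
  obtain ⟨wD, hwD⟩ := exists_walk_through_componentIn hpu hpv hupu hvpv.symm
  obtain ⟨wE, hwE⟩ := exists_walk_through_componentIn hqv hqu hvqv huqu.symm
  refine hG.adj_of_walks_through_separated huv (Finset.disjoint_coe.2 hdisj) ?_ wD hwD wE hwE
  intro p hp q hq hpq
  exact Finset.disjoint_left.1 hdisj
    ((isClosedIn_componentIn _ _).2 p hp q ((isClosedIn_componentIn _ _).1 hq) hpq) hq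

def IsSimplicialIn (G : SimpleGraph V) (A : Finset V) (z : V) : Prop :=
  G.IsClique (↑A ∩ G.neighborSet z)

theorem IsChordal.exists_isSimplicialIn_notMem (hG : IsChordal G) (A C : Finset V)
    (hC : G.IsClique (C : Set V)) (hAC : ¬A ⊆ C) :
    ∃ z ∈ A, z ∉ C ∧ IsSimplicialIn G A z := by
  induction A using Finset.strongInduction generalizing C with
  | H A ih =>
  by_cases hA : G.IsClique (A : Set V)
  · obtain ⟨z, hzA, hzC⟩ := Finset.not_subset.1 hAC
    exact ⟨z, hzA, hzC, hA.subset Set.inter_subset_left⟩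
  obtain ⟨a, ha, b, hb, hab, hnadj⟩ : ∃ a ∈ A, ∃ b ∈ A, a ≠ b ∧ ¬G.Adj a b := by
    simpa [SimpleGraph.IsClique, Set.Pairwise] using hA
  obtain ⟨S, hSA, hS, Da, Db, hDa, hDb, haDa, hbDb, hdisj⟩ :=
    hG.exists_isClique_separator ha hb hab hnadj
  -- a simplicial vertex of `D ∪ S` outside the clique `S` lies in `D`, so it is simplicial in `A`
  have side : ∀ D E, IsClosedIn G (A \ S) D → IsClosedIn G (A \ S) E → Disjoint D E →
      D.Nonempty → E.Nonempty → Disjoint D C →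
      ∃ z ∈ A, z ∉ C ∧ IsSimplicialIn G A z := by
    intro D E hD hE hDE ⟨d, hd⟩ ⟨e, he⟩ hDC
    have hDS : D ∪ S ⊂ A := by
      refine Finset.ssubset_iff_of_subset (Finset.union_subset (hD.1.trans Finset.sdiff_subset) hSA)
        |>.2 ⟨e, (Finset.mem_sdiff.1 (hE.1 he)).1, ?_⟩
      rw [Finset.mem_union, not_or]
      exact ⟨Finset.disjoint_right.1 hDE he, (Finset.mem_sdiff.1 (hE.1 he)).2⟩
    have hd' : ¬D ∪ S ⊆ S := fun h => (Finset.mem_sdiff.1 (hD.1 hd)).2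
      (h (Finset.mem_union_left _ hd))
    obtain ⟨z, hz, hzS, hzsimp⟩ := ih _ hDS S hS hd'
    have hzD : z ∈ D := (Finset.mem_union.1 hz).resolve_right hzS
    refine ⟨z, hD.1.trans Finset.sdiff_subset hzD, Finset.disjoint_left.1 hDC hzD,
      hzsimp.subset ?_⟩
    rintro y ⟨hy, hzy⟩
    refine ⟨?_, hzy⟩
    by_cases hyS : y ∈ S
    · exact Finset.mem_union_right _ hyS
    · exact Finset.mem_union_left _ (hD.2 z hzD y (Finset.mem_sdiff.2 ⟨hy, hyS⟩) hzy)
  have : Disjoint Da C ∨ Disjoint Db C := by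
    by_contra! h
    obtain ⟨p, hpDa, hpC⟩ := Finset.not_disjoint_iff.1 h.1
    obtain ⟨q, hqDb, hqC⟩ := Finset.not_disjoint_iff.1 h.2
    have hpq : p ≠ q := fun hpq => Finset.disjoint_left.1 hdisj hpDa (hpq ▸ hqDb)
    exact Finset.disjoint_left.1 hdisj (hDa.2 p hpDa q (hDb.1 hqDb) (hC hpC hqC hpq)) hqDb
  rcases this with h | h
  · exact side Da Db hDa hDb hdisj ⟨a, haDa⟩ ⟨b, hbDb⟩ h
  · exact side Db Da hDb hDa hdisj.symm ⟨b, hbDb⟩ ⟨a, haDa⟩ h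

theorem IsChordal.exists_isSimplicialIn (hG : IsChordal G) {A : Finset V} (hA : A.Nonempty) :
    ∃ z ∈ A, IsSimplicialIn G A z := by
  obtain ⟨z, hz, -, hsimp⟩ := hG.exists_isSimplicialIn_notMem A ∅ (by simp)
    (by simpa [Finset.subset_empty] using hA.ne_empty)
  exact ⟨z, hz, hsimp⟩

theorem IsIndepIn.insert {A S : Finset V} {y : V} (hS : IsIndepIn G A S) (hy : y ∈ A)
    (hyS : ∀ w ∈ S, ¬G.Adj y w) : IsIndepIn G A (insert y S) := by
  refine ⟨Finset.insert_subset hy hS.1, fun u hu v hv huv => ?_⟩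
  rw [Finset.mem_insert] at hu hv
  rcases hu with rfl | hu <;> rcases hv with rfl | hv
  · exact G.irrefl huv
  · exact hyS v hv huv
  · exact hyS u hu huv.symm
  · exact hS.2 u hu v hv huv

theorem mem_delClosedNbhd {A : Finset V} {x y : V} :
    y ∈ delClosedNbhd G A x ↔ y ∈ A ∧ y ≠ x ∧ ¬G.Adj x y := by
  simp [delClosedNbhd]

theorem delClosedNbhd_subset_erase (A : Finset V) (x : V) : delClosedNbhd G A x ⊆ A.erase x :=
  fun _ hy => Finset.mem_erase.2 ⟨(mem_delClosedNbhd.1 hy).2.1, (mem_delClosedNbhd.1 hy).1⟩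

theorem delClosedNbhd_ssubset {A : Finset V} {x : V} (hx : x ∈ A) : delClosedNbhd G A x ⊂ A :=
  (delClosedNbhd_subset_erase A x).trans_ssubset (Finset.erase_ssubset hx)

theorem VertexDecomposableOn.of_adj_isSimplicialIn {A : Finset V} {x z : V} (hx : x ∈ A)
    (hz : z ∈ A) (hxz : G.Adj x z) (hsimp : IsSimplicialIn G A z)
    (hlink : VertexDecomposableOn G (delClosedNbhd G A x))
    (hdel : VertexDecomposableOn G (A.erase x)) : VertexDecomposableOn G A := by
  refine .shed A x hx hlink hdel fun S hS => ⟨z, hz, hxz, ?_⟩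
  refine IsIndepIn.insert ⟨hS.1.trans (delClosedNbhd_subset_erase A x), hS.2⟩
    (Finset.mem_erase.2 ⟨hxz.ne.symm, hz⟩) fun w hw hzw => ?_
  obtain ⟨hwA, hwx, hxw⟩ := mem_delClosedNbhd.1 (hS.1 hw)
  exact hxw (hsimp ⟨hx, hxz.symm⟩ ⟨hwA, hzw⟩ hwx.symm)

theorem VertexDecomposableOn.congr {H : SimpleGraph V} {A : Finset V}
    (h : VertexDecomposableOn G A) (hGH : ∀ u ∈ A, ∀ v ∈ A, G.Adj u v ↔ H.Adj u v) :
    VertexDecomposableOn H A := by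
  induction h with
  | edgeless A h => exact .edgeless A fun u hu v hv => (hGH u hu v hv).not.1 (h u hu v hv)
  | shed A x hx hlink hdel hexch ihlink ihdel =>
    have hlinkeq : delClosedNbhd G A x = delClosedNbhd H A x := by
      ext y
      simp only [mem_delClosedNbhd]
      exact and_congr_right fun hy => by rw [hGH x hx y hy]
    have hindep : ∀ {B S : Finset V}, B ⊆ A → (IsIndepIn G B S ↔ IsIndepIn H B S) :=
      fun hB => and_congr_right fun hS => forall₂_congr fun u hu => forall₂_congr fun v hv =>
        (hGH u (hB (hS hu)) v (hB (hS hv))).not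
    have hlinkA : delClosedNbhd G A x ⊆ A := (delClosedNbhd_ssubset hx).subset
    refine .shed A x hx (hlinkeq ▸ ihlink fun u hu v hv => hGH u (hlinkA hu) v (hlinkA hv))
      (ihdel fun u hu v hv => hGH u (Finset.mem_of_mem_erase hu) v (Finset.mem_of_mem_erase hv))
      fun S hS => ?_
    obtain ⟨y, hy, hxy, hind⟩ := hexch S ((hindep hlinkA).2 (hlinkeq ▸ hS))
    exact ⟨y, hy, (hGH x hx y hy).1 hxy, (hindep (Finset.erase_subset x A)).1 hind⟩

theorem IsChordal.vertexDecomposableOn (hG : IsChordal G) (A : Finset V) :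
    VertexDecomposableOn G A := by
  classical
  induction A using Finset.strongInduction with
  | H A ih =>
  by_cases hedge : ∀ u ∈ A, ∀ v ∈ A, ¬G.Adj u v
  · exact .edgeless A hedge
  push Not at hedge
  obtain ⟨u, hu, v, hv, huv⟩ := hedge
  -- a simplicial vertex among the non-isolated vertices has a neighbour `x`, which is shedding
  obtain ⟨z, hzA', hz⟩ :=
    hG.exists_isSimplicialIn (A := A.filter fun y => ∃ w ∈ A, G.Adj y w)
      ⟨u, Finset.mem_filter.2 ⟨hu, v, hv, huv⟩⟩
  obtain ⟨hzA, x, hxA, hzx⟩ := Finset.mem_filter.1 hzA'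
  refine .of_adj_isSimplicialIn hxA hzA hzx.symm (hz.subset ?_)
    (ih _ (delClosedNbhd_ssubset hxA)) (ih _ (Finset.erase_ssubset hxA))
  rintro y ⟨hy, hzy⟩
  exact ⟨Finset.mem_filter.2 ⟨hy, z, hzA, hzy.symm⟩, hzy⟩

theorem vertexDecomposableOn_of_forall_adj_simplicial {ι : Type*} (r z : ι → V)
    (hrz : ∀ i, G.Adj (r i) (z i)) (hzr : ∀ i j, z i ≠ r j)
    (hz : ∀ i, G.IsClique (G.neighborSet (z i)))
    (hfree : ∀ A : Finset V, (∀ i, r i ∉ A) → VertexDecomposableOn G A)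
    (A : Finset V) (hA : ∀ i, r i ∈ A → z i ∈ A) : VertexDecomposableOn G A := by
  induction A using Finset.strongInduction with
  | H A ih =>
  by_cases hroot : ∃ i, r i ∈ A
  swap
  · push Not at hroot
    exact hfree A hroot
  obtain ⟨i, hi⟩ := hroot
  refine .of_adj_isSimplicialIn hi (hA i hi) (hrz i) ((hz i).subset Set.inter_subset_right)
    (ih _ (delClosedNbhd_ssubset hi) fun j hj => ?_) (ih _ (Finset.erase_ssubset hi) fun j hj => ?_)
  · obtain ⟨hjA, hji, hnadj⟩ := mem_delClosedNbhd.1 hj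
    refine mem_delClosedNbhd.2 ⟨hA j hjA, hzr j i, fun hadj => hnadj ?_⟩
    exact hz j hadj.symm (hrz j).symm hji.symm
  · obtain ⟨-, hjA⟩ := Finset.mem_erase.1 hj
    exact Finset.mem_erase.2 ⟨hzr j i, hA j hjA⟩

section iSup

variable {ι : Type*} {Gs : ι → SimpleGraph V}

omit [DecidableEq V] in
theorem SimpleGraph.Walk.edges_subset_edgeSet_of_iSup
    (hdisj : Pairwise fun i j => Disjoint (Gs i).support (Gs j).support)
    {i : ι} {u v : V} (w : (⨆ i, Gs i).Walk u v) (hu : u ∈ (Gs i).support) :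
    ∀ e ∈ w.edges, e ∈ (Gs i).edgeSet := by
  induction w with
  | nil => simp
  | @cons u u' v h w ih =>
    obtain ⟨j, hj⟩ := iSup_adj.1 h
    obtain rfl : j = i := by
      by_contra hji
      exact Set.disjoint_left.1 (hdisj hji) ⟨u', hj⟩ hu
    intro e he
    rcases List.mem_cons.1 (Walk.edges_cons h w ▸ he) with rfl | he
    · exact hj
    · exact ih ⟨u, hj.symm⟩ e he

omit [DecidableEq V] in
theorem IsChordal.iSup (hGs : ∀ i, IsChordal (Gs i))
    (hdisj : Pairwise fun i j => Disjoint (Gs i).support (Gs j).support) :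
    IsChordal (⨆ i, Gs i) := by
  intro x w hw hlen
  cases w with
  | nil => exact absurd hw Walk.not_isCycle_nil
  | cons h p =>
    obtain ⟨i, hi⟩ := iSup_adj.1 h
    have hE := Walk.edges_subset_edgeSet_of_iSup hdisj (.cons h p) ⟨_, hi⟩
    obtain ⟨a, b, ha, hb, hab, he⟩ :=
      hGs i x (Walk.transfer _ (Gs i) hE) (hw.transfer hE) (by rwa [Walk.length_transfer])
    rw [Walk.support_transfer] at ha hb
    rw [Walk.edges_transfer] at he
    exact ⟨a, b, ha, hb, iSup_adj.2 ⟨i, hab⟩, he⟩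

end iSup

end

theorem stmt_4_general {V : Type*} [DecidableEq V] (n : ℕ) (x : Fin n → V) (B : Fin n → Finset V)
    (G : SimpleGraph V) (Gs : Fin n → SimpleGraph V)
    (hGsupp : ∀ u v, G.Adj u v → (∃ i, u = x i) ∧ (∃ j, v = x j))
    (hxB : ∀ i, x i ∈ B i)
    (hBdisj : ∀ i j, i ≠ j → Disjoint (B i) (B j))
    (hGssupp : ∀ i, ∀ u v, (Gs i).Adj u v → u ∈ B i ∧ v ∈ B i)
    -- each `Gs i` is chordal
    (hchordal : ∀ i, IsChordal (Gs i))
    -- `x i` is a neighbor of a simplicial vertex `z` of `Gs i`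
    (hsimp : ∀ i, ∃ z ∈ B i,
      (∀ u v, (Gs i).Adj z u → (Gs i).Adj z v → u ≠ v → (Gs i).Adj u v) ∧
      (Gs i).Adj z (x i)) :
    VertexDecomposableOn (G ⊔ ⨆ i, Gs i) (Finset.univ.biUnion B) := by
  choose z hzB hzsimp hzx using hsimp
  have hGs_le : ∀ i, Gs i ≤ G ⊔ ⨆ i, Gs i := fun i => (le_iSup Gs i).trans le_sup_right
  have eq_of_mem : ∀ {v i j}, v ∈ B i → v ∈ B j → i = j := fun hi hj =>
    by_contra fun hij => Finset.disjoint_left.1 (hBdisj _ _ hij) hi hj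
  have hz_ne : ∀ i j, z i ≠ x j := by
    rintro i j h
    obtain rfl := eq_of_mem (hzB i) (h ▸ hxB j)
    exact (Gs i).ne_of_adj (hzx i) h
  have hz_clique : ∀ i, (G ⊔ ⨆ i, Gs i).IsClique ((G ⊔ ⨆ i, Gs i).neighborSet (z i)) := by
    have hnbr : ∀ {i w}, (G ⊔ ⨆ i, Gs i).Adj (z i) w → (Gs i).Adj (z i) w := by
      intro i w h
      rcases h with hG | h
      · exact absurd (hGsupp _ _ hG).1 fun ⟨j, hj⟩ => hz_ne i j hj
      · obtain ⟨j, hj⟩ := iSup_adj.1 h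
        rwa [← eq_of_mem (hzB i) (hGssupp j _ _ hj).1] at hj
    intro i u hu v hv huv
    exact hGs_le i (hzsimp i u v (hnbr hu) (hnbr hv) huv)
  have hK : IsChordal (⨆ i, Gs i) := IsChordal.iSup hchordal fun i j hij =>
    (Finset.disjoint_coe.2 (hBdisj i j hij)).mono (fun v ⟨w, hvw⟩ => (hGssupp i v w hvw).1)
      (fun v ⟨w, hvw⟩ => (hGssupp j v w hvw).1)
  refine vertexDecomposableOn_of_forall_adj_simplicial x z (fun i => hGs_le i (hzx i).symm) hz_ne
    hz_clique (fun A hA => (hK.vertexDecomposableOn A).congr fun u hu v _ => ?_) _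
    fun i _ => Finset.mem_biUnion.2 ⟨i, Finset.mem_univ i, hzB i⟩
  -- edges of `G` join roots, and `A` contains none
  refine (or_iff_right fun hG => ?_).symm
  obtain ⟨⟨j, rfl⟩, -⟩ := hGsupp u v hG
  exact hA j hu

/-- If each `Gs i` is a connected chordal graph with at least two vertices
attached to `G` at a vertex `x i` that is a neighbor of a simplicial vertex of `Gs i`,
then the attachment graph `G(G_1, …, G_n)` is vertex decomposable. -/
theorem stmt_4 {V : Type*} [DecidableEq V] (n : ℕ) (x : Fin n → V) (B : Fin n → Finset V)
    (G : SimpleGraph V) (Gs : Fin n → SimpleGraph V)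
    (hxinj : Function.Injective x)
    (hGsupp : ∀ u v, G.Adj u v → (∃ i, u = x i) ∧ (∃ j, v = x j))
    (hxB : ∀ i, x i ∈ B i)
    (hBcard : ∀ i, 2 ≤ (B i).card)
    (hBdisj : ∀ i j, i ≠ j → Disjoint (B i) (B j))
    (hGssupp : ∀ i, ∀ u v, (Gs i).Adj u v → u ∈ B i ∧ v ∈ B i)
    (hconn : ∀ i, ((Gs i).induce ((B i : Set V))).Connected)
    -- each `Gs i` is chordal
    (hchordal : ∀ i, IsChordal (Gs i))
    -- `x i` is a neighbor of a simplicial vertex `z` of `Gs i`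
    (hsimp : ∀ i, ∃ z ∈ B i,
      (∀ u v, (Gs i).Adj z u → (Gs i).Adj z v → u ≠ v → (Gs i).Adj u v) ∧
      (Gs i).Adj z (x i)) :
    VertexDecomposableOn (G ⊔ ⨆ i, Gs i) (Finset.univ.biUnion B) :=
  stmt_4_general n x B G Gs hGsupp hxB hBdisj hGssupp hchordal hsimp
end

section
/- Let G be a finite simple graph on vertex set {x_{11}, …, x_{n1}}, let m_1, …, m_n ≥ 2 be integers, and let G_1, …, G_n be connected finite simple graphs with V(G_i) = {x_{i1}, …, x_{im_i}}. Suppose that for every i = 1, …, n the graphs G_i and G_i \ {x_{i1}} are unmixed. Then every maximal independent set of the attachment graph G(G_1, …, G_n) has cardinality α(G_1) + α(G_2) + … + α(G_n); in particular, G(G_1, …, G_n) is unmixed. -/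
variable {V : Type*} [DecidableEq V]

/-! Each maximal independent set `S` of the attachment graph meets every block `B i` in a set
which is maximal independent either in `G_i` or in `G_i \ x_i`: a vertex of `B i` other than `x i`
has all its neighbours inside `B i`, so only `x i` can be dominated from outside the block.
Since `x i` has a neighbour in the connected graph `G_i`, a maximal independent set of
`G_i \ x_i` extends to one of `G_i` that avoids `x i`, so both unmixedness hypotheses give
`|S ∩ B i| = α(G_i)`. -/

section MaximalIndependentSets

variable {G : SimpleGraph V} {A S : Finset V}

theorem isMaxIndepIn_iff :
    IsMaxIndepIn G A S ↔ IsIndepIn G A S ∧ ∀ v ∈ A, v ∉ S → ∃ u ∈ S, G.Adj v u := by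
  refine ⟨fun hS => ⟨hS.1, fun v hvA hvS => ?_⟩, fun ⟨hS, hdom⟩ => ⟨hS, fun T hT hST => ?_⟩⟩
  · by_contra! hfree
    have hins : IsIndepIn G A (insert v S) := by
      refine ⟨Finset.insert_subset hvA hS.1.1, ?_⟩
      simp only [Finset.mem_insert, forall_eq_or_imp]
      exact ⟨⟨G.loopless.irrefl v, hfree⟩, fun u hu =>
        ⟨fun h => hfree u hu h.symm, hS.1.2 u hu⟩⟩
    exact hvS ((hS.2 _ hins (Finset.subset_insert v S)) ▸ Finset.mem_insert_self v S)
  · refine Finset.Subset.antisymm hST fun v hvT => ?_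
    by_contra hvS
    obtain ⟨u, huS, hvu⟩ := hdom v (hT.1 hvT) hvS
    exact hT.2 v hvT u (hST huS) hvu

theorem IsIndepIn.exists_isMaxIndepIn_superset (hS : IsIndepIn G A S) :
    ∃ T, IsMaxIndepIn G A T ∧ S ⊆ T := by
  classical
  let C := A.powerset.filter fun T => IsIndepIn G A T ∧ S ⊆ T
  obtain ⟨T, hTC, hTmax⟩ := C.exists_max_image Finset.card
    ⟨S, Finset.mem_filter.mpr ⟨Finset.mem_powerset.mpr hS.1, hS, subset_rfl⟩⟩
  obtain ⟨-, hT, hST⟩ := Finset.mem_filter.mp hTC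
  refine ⟨T, ⟨hT, fun U hU hTU => ?_⟩, hST⟩
  exact Finset.eq_of_subset_of_card_le hTU <|
    hTmax U (Finset.mem_filter.mpr ⟨Finset.mem_powerset.mpr hU.1, hU, hST.trans hTU⟩)

theorem UnmixedOn.card_eq_indepNumOn (hA : UnmixedOn G A) (hS : IsMaxIndepIn G A S) :
    S.card = indepNumOn G A := by
  have hbdd : BddAbove {k | ∃ T, IsIndepIn G A T ∧ T.card = k} :=
    ⟨A.card, by rintro k ⟨T, hT, rfl⟩; exact Finset.card_le_card hT.1⟩
  obtain ⟨T, hT, hTcard⟩ := Nat.sSup_mem (s := {k | ∃ T, IsIndepIn G A T ∧ T.card = k})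
    ⟨S.card, S, hS.1, rfl⟩ hbdd
  obtain ⟨T', hT', hTT'⟩ := hT.exists_isMaxIndepIn_superset
  refine le_antisymm (le_csSup hbdd ⟨S, hS.1, rfl⟩) ?_
  calc indepNumOn G A = T.card := hTcard.symm
    _ ≤ T'.card := Finset.card_le_card hTT'
    _ = S.card := hA T' S hT' hS

theorem UnmixedOn.card_eq_indepNumOn_of_erase {x y : V} (hA : UnmixedOn G A)
    (hAx : UnmixedOn G (A.erase x)) (hy : y ∈ A) (hxy : G.Adj x y)
    (hS : IsMaxIndepIn G (A.erase x) S) : S.card = indepNumOn G A := by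
  have hyx : y ∈ A.erase x := Finset.mem_erase.mpr ⟨hxy.ne.symm, hy⟩
  have hy_indep : IsIndepIn G (A.erase x) {y} :=
    ⟨Finset.singleton_subset_iff.mpr hyx, by simp⟩
  obtain ⟨T, hT, hyT⟩ := hy_indep.exists_isMaxIndepIn_superset
  have hTA : IsMaxIndepIn G A T := by
    rw [isMaxIndepIn_iff] at hT ⊢
    refine ⟨⟨hT.1.1.trans (Finset.erase_subset x A), hT.1.2⟩, fun v hvA hvT => ?_⟩
    by_cases hvx : v = x
    · exact ⟨y, hyT (Finset.mem_singleton_self y), hvx ▸ hxy⟩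
    · exact hT.2 v (Finset.mem_erase.mpr ⟨hvx, hvA⟩) hvT
  rw [hAx S T hS hT, hA.card_eq_indepNumOn hTA]

theorem IsMaxIndepIn.inter_block {H K : SimpleGraph V} {B : Finset V} {x : V}
    (hS : IsMaxIndepIn H A S) (hBA : B ⊆ A) (hadj : ∀ u ∈ B, ∀ v ∈ B, H.Adj u v ↔ K.Adj u v)
    (hnbr : ∀ w ∈ B, w ≠ x → ∀ u, H.Adj w u → u ∈ B) :
    IsMaxIndepIn K B (S ∩ B) ∨ IsMaxIndepIn K (B.erase x) (S ∩ B) := by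
  rw [isMaxIndepIn_iff] at hS
  have hindep : IsIndepIn K B (S ∩ B) := ⟨Finset.inter_subset_right, fun u hu v hv huv =>
    hS.1.2 u (Finset.mem_inter.mp hu).1 v (Finset.mem_inter.mp hv).1
      ((hadj u (Finset.mem_inter.mp hu).2 v (Finset.mem_inter.mp hv).2).mpr huv)⟩
  have hdom : ∀ w ∈ B, w ≠ x → w ∉ S ∩ B → ∃ u ∈ S ∩ B, K.Adj w u := by
    intro w hwB hwx hwS
    obtain ⟨u, huS, hwu⟩ :=
      hS.2 w (hBA hwB) fun h => hwS (Finset.mem_inter.mpr ⟨h, hwB⟩)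
    have huB := hnbr w hwB hwx u hwu
    exact ⟨u, Finset.mem_inter.mpr ⟨huS, huB⟩, (hadj w hwB u huB).mp hwu⟩
  simp only [isMaxIndepIn_iff]
  by_cases hx : x ∈ S ∩ B ∨ ∃ u ∈ S ∩ B, K.Adj x u
  · refine Or.inl ⟨hindep, fun w hwB hwS => ?_⟩
    by_cases hwx : w = x
    · subst hwx
      exact hx.resolve_left hwS
    · exact hdom w hwB hwx hwS
  · push Not at hx
    refine Or.inr ⟨⟨fun u hu => Finset.mem_erase.mpr ⟨?_, hindep.1 hu⟩, hindep.2⟩,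
      fun w hw hwS => hdom w (Finset.mem_of_mem_erase hw) (Finset.ne_of_mem_erase hw) hwS⟩
    rintro rfl
    exact hx.1 hu

end MaximalIndependentSets

section Attachment

omit [DecidableEq V]

theorem SimpleGraph.Connected.exists_adj_of_induce {G : SimpleGraph V} {B : Finset V} {x : V}
    (hconn : (G.induce (B : Set V)).Connected) (hx : x ∈ B) (hB : 2 ≤ B.card) :
    ∃ y ∈ B, G.Adj x y := by
  have : Nontrivial (B : Set V) :=
    Set.nontrivial_coe_sort.mpr (Finset.one_lt_card_iff_nontrivial.mp hB)
  obtain ⟨y, hxy⟩ := hconn.preconnected.exists_adj_of_nontrivial ⟨x, hx⟩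
  exact ⟨y, y.2, hxy⟩

variable {n : ℕ} {x : Fin n → V} {B : Fin n → Finset V} {G : SimpleGraph V}
  {Gs : Fin n → SimpleGraph V}

theorem sup_iSup_adj {u v : V} :
    (G ⊔ ⨆ i, Gs i).Adj u v ↔ G.Adj u v ∨ ∃ i, (Gs i).Adj u v := by
  simp [SimpleGraph.iSup_adj]

theorem eq_of_mem_of_pairwise_disjoint (hBdisj : ∀ i j, i ≠ j → Disjoint (B i) (B j))
    {i j : Fin n} {u : V} (hi : u ∈ B i) (hj : u ∈ B j) : i = j := by
  by_contra hij
  exact Finset.disjoint_left.mp (hBdisj i j hij) hi hj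

theorem attach_adj_iff_of_mem (hGsupp : ∀ u v, G.Adj u v → (∃ i, u = x i) ∧ (∃ j, v = x j))
    (hxB : ∀ i, x i ∈ B i) (hBdisj : ∀ i j, i ≠ j → Disjoint (B i) (B j))
    (hGssupp : ∀ i, ∀ u v, (Gs i).Adj u v → u ∈ B i ∧ v ∈ B i)
    {i : Fin n} {u v : V} (hu : u ∈ B i) (hv : v ∈ B i) :
    (G ⊔ ⨆ j, Gs j).Adj u v ↔ (Gs i).Adj u v := by
  refine ⟨fun h => ?_, fun h => sup_iSup_adj.mpr (Or.inr ⟨i, h⟩)⟩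
  rcases sup_iSup_adj.mp h with hG | ⟨j, hj⟩
  · obtain ⟨⟨k, rfl⟩, ⟨l, rfl⟩⟩ := hGsupp u v hG
    obtain rfl := eq_of_mem_of_pairwise_disjoint hBdisj (hxB k) hu
    obtain rfl := eq_of_mem_of_pairwise_disjoint hBdisj (hxB l) hv
    exact absurd rfl hG.ne
  · obtain rfl := eq_of_mem_of_pairwise_disjoint hBdisj (hGssupp j u v hj).1 hu
    exact hj

theorem mem_of_attach_adj (hGsupp : ∀ u v, G.Adj u v → (∃ i, u = x i) ∧ (∃ j, v = x j))
    (hxB : ∀ i, x i ∈ B i) (hBdisj : ∀ i j, i ≠ j → Disjoint (B i) (B j))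
    (hGssupp : ∀ i, ∀ u v, (Gs i).Adj u v → u ∈ B i ∧ v ∈ B i)
    {i : Fin n} {w u : V} (hw : w ∈ B i) (hwx : w ≠ x i)
    (h : (G ⊔ ⨆ j, Gs j).Adj w u) : u ∈ B i := by
  rcases sup_iSup_adj.mp h with hG | ⟨j, hj⟩
  · obtain ⟨⟨k, rfl⟩, -⟩ := hGsupp w u hG
    obtain rfl := eq_of_mem_of_pairwise_disjoint hBdisj (hxB k) hw
    exact absurd rfl hwx
  · obtain rfl := eq_of_mem_of_pairwise_disjoint hBdisj (hGssupp j w u hj).1 hw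
    exact (hGssupp j w u hj).2

end Attachment

theorem card_eq_sum_card_inter {ι : Type*} [Fintype ι] {B : ι → Finset V} (hBdisj : ∀ i j, i ≠ j → Disjoint (B i) (B j))
    {S : Finset V} (hS : S ⊆ Finset.univ.biUnion B) :
    S.card = ∑ i, (S ∩ B i).card := by
  rw [← Finset.card_biUnion, ← Finset.inter_biUnion, Finset.inter_eq_left.mpr hS]
  exact fun i _ j _ hij =>
    (hBdisj i j hij).mono Finset.inter_subset_right Finset.inter_subset_right

theorem stmt_10_general {V : Type*} [DecidableEq V] (n : ℕ) (x : Fin n → V) (B : Fin n → Finset V)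
    (G : SimpleGraph V) (Gs : Fin n → SimpleGraph V)
    (hGsupp : ∀ u v, G.Adj u v → (∃ i, u = x i) ∧ (∃ j, v = x j))
    (hxB : ∀ i, x i ∈ B i)
    (hBcard : ∀ i, 2 ≤ (B i).card)
    (hBdisj : ∀ i j, i ≠ j → Disjoint (B i) (B j))
    (hGssupp : ∀ i, ∀ u v, (Gs i).Adj u v → u ∈ B i ∧ v ∈ B i)
    (hconn : ∀ i, ((Gs i).induce ((B i : Set V))).Connected)
    (hun : ∀ i, UnmixedOn (Gs i) (B i))
    (hun' : ∀ i, UnmixedOn (Gs i) ((B i).erase (x i))) :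
    (∀ S, IsMaxIndepIn (G ⊔ ⨆ i, Gs i) (Finset.univ.biUnion B) S →
        S.card = ∑ i, indepNumOn (Gs i) (B i)) ∧
      UnmixedOn (G ⊔ ⨆ i, Gs i) (Finset.univ.biUnion B) := by
  have hcard : ∀ S, IsMaxIndepIn (G ⊔ ⨆ i, Gs i) (Finset.univ.biUnion B) S →
      S.card = ∑ i, indepNumOn (Gs i) (B i) := by
    intro S hS
    rw [card_eq_sum_card_inter hBdisj hS.1.1]
    refine Finset.sum_congr rfl fun i _ => ?_
    obtain ⟨y, hyB, hxy⟩ := (hconn i).exists_adj_of_induce (hxB i) (hBcard i)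
    rcases hS.inter_block (Finset.subset_biUnion_of_mem B (Finset.mem_univ i))
        (fun u hu v hv => attach_adj_iff_of_mem hGsupp hxB hBdisj hGssupp hu hv)
        (fun w hw hwx u => mem_of_attach_adj hGsupp hxB hBdisj hGssupp hw hwx) with hmax | hmax
    · exact (hun i).card_eq_indepNumOn hmax
    · exact (hun i).card_eq_indepNumOn_of_erase (hun' i) hyB hxy hmax
  exact ⟨hcard, fun S T hS hT => (hcard S hS).trans (hcard T hT).symm⟩

/-- If `Gs i` and `Gs i \ {x i}` are unmixed for every `i`, then every
maximal independent set of the attachment graph `G(G_1, …, G_n)` has cardinality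
`α(G_1) + ⋯ + α(G_n)`; in particular, the attachment graph is unmixed. -/
theorem stmt_10 {V : Type*} [DecidableEq V] (n : ℕ) (x : Fin n → V) (B : Fin n → Finset V)
    (G : SimpleGraph V) (Gs : Fin n → SimpleGraph V)
    (hxinj : Function.Injective x)
    (hGsupp : ∀ u v, G.Adj u v → (∃ i, u = x i) ∧ (∃ j, v = x j))
    (hxB : ∀ i, x i ∈ B i)
    (hBcard : ∀ i, 2 ≤ (B i).card)
    (hBdisj : ∀ i j, i ≠ j → Disjoint (B i) (B j))
    (hGssupp : ∀ i, ∀ u v, (Gs i).Adj u v → u ∈ B i ∧ v ∈ B i)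
    (hconn : ∀ i, ((Gs i).induce ((B i : Set V))).Connected)
    (hun : ∀ i, UnmixedOn (Gs i) (B i))
    (hun' : ∀ i, UnmixedOn (Gs i) ((B i).erase (x i))) :
    (∀ S, IsMaxIndepIn (G ⊔ ⨆ i, Gs i) (Finset.univ.biUnion B) S →
        S.card = ∑ i, indepNumOn (Gs i) (B i)) ∧
      UnmixedOn (G ⊔ ⨆ i, Gs i) (Finset.univ.biUnion B) :=
  stmt_10_general n x B G Gs hGsupp hxB hBcard hBdisj hGssupp hconn hun hun'
end
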